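/- Let f : Ω → ℂⁿ be holomorphic with invertible derivative on open Ω ⊆ ℂⁿ, and fix α ∈ ℂ. If g, h : Ω → ℂⁿ are holomorphic with invertible derivatives satisfying Dg(z)⁻¹D²g(z) = α·Df(z)⁻¹D²f(z) and Dh(z)⁻¹D²h(z) = α·Df(z)⁻¹D²f(z) on Ω, and g(z₀) = h(z₀), Dg(z₀) = Dh(z₀) at some point z₀ of the connected open set Ω, then g = h on Ω. -/

import Mathlib

/-!
Both `P_g` and `P_h` equal `α • P_f`, so `P_g = P_h`. For `M = Dg · (Dh)⁻¹` the product rule gives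
`dM(u) = D²g(u) (Dh)⁻¹ - Dg (Dh)⁻¹ D²h(u) (Dh)⁻¹ = Dg (P_g(u) - P_h(u)) (Dh)⁻¹ = 0`, so `M` is
constant on the connected set `Ω`. As `M(z₀) = 1`, `Dg = Dh` on `Ω`, and then `g = h` because
they agree at `z₀`.

This needs the second derivatives to exist: a holomorphic map on `ℂⁿ` has a holomorphic
derivative, since each directional derivative `Dg(z) u = (2πi)⁻¹ ∮ g(z + t u) / t² dt` can be
differentiated under the integral sign, the integrand being dominated thanks to the Cauchy
estimates for `Dg`.
-/

open Complex Set Metric Filter Topology Real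

lemma differentiableAt_clm_apply_iff {𝕜 X E F : Type*} [NontriviallyNormedField 𝕜]
    [CompleteSpace 𝕜] [NormedAddCommGroup X] [NormedSpace 𝕜 X] [NormedAddCommGroup E]
    [NormedSpace 𝕜 E] [FiniteDimensional 𝕜 E] [NormedAddCommGroup F] [NormedSpace 𝕜 F]
    {f : X → E →L[𝕜] F} {x : X} :
    DifferentiableAt 𝕜 f x ↔ ∀ y, DifferentiableAt 𝕜 (fun x => f x y) x := by
  refine ⟨fun h y => h.clm_apply (differentiableAt_const y), fun h => ?_⟩
  let e : (E →L[𝕜] F) ≃L[𝕜] Fin (Module.finrank 𝕜 E) → F :=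
    ((ContinuousLinearEquiv.ofFinrankEq (Module.finrank_fin_fun 𝕜).symm).arrowCongr
      (1 : F ≃L[𝕜] F)).trans (ContinuousLinearEquiv.piRing _)
  rw [← e.comp_differentiableAt_iff, differentiableAt_pi]
  exact fun i => h _

section Regularity

variable {E F : Type*} [NormedAddCommGroup E] [NormedSpace ℂ E] [NormedAddCommGroup F]
  [NormedSpace ℂ F]

lemma norm_fderiv_le_of_forall_mem_closedBall_norm_le {g : E → F} {z : E} {R M : ℝ} (hR : 0 < R)
    (hg : DifferentiableOn ℂ g (closedBall z R)) (hM : ∀ w ∈ closedBall z R, ‖g w‖ ≤ M) :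
    ‖fderiv ℂ g z‖ ≤ M / R := by
  have hM₀ : 0 ≤ M := (norm_nonneg _).trans (hM z (mem_closedBall_self hR.le))
  refine ContinuousLinearMap.opNorm_le_bound _ (by positivity) fun u => ?_
  rcases eq_or_ne u 0 with rfl | hu
  · simp
  have hu₀ : 0 < ‖u‖ := norm_pos_iff.2 hu
  have hmaps : MapsTo (fun t : ℂ => z + t • u) (closedBall 0 (R / ‖u‖)) (closedBall z R) := by
    intro t ht
    rw [mem_closedBall_zero_iff, le_div_iff₀ hu₀] at ht
    simpa [norm_smul] using ht
  have hslice : DifferentiableOn ℂ (fun t : ℂ => g (z + t • u)) (closedBall 0 (R / ‖u‖)) :=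
    hg.comp (by fun_prop) hmaps
  have hderiv : HasLineDerivAt ℂ g (fderiv ℂ g z u) z u :=
    (hg.differentiableAt (closedBall_mem_nhds z hR)).hasFDerivAt.hasLineDerivAt u
  have := norm_deriv_le_of_forall_mem_sphere_norm_le (div_pos hR hu₀)
    (hslice.diffContOnCl_ball subset_rfl) fun t ht => hM _ (hmaps (sphere_subset_closedBall ht))
  rw [hderiv.deriv] at this
  calc ‖fderiv ℂ g z u‖ ≤ M / (R / ‖u‖) := this
    _ = M / R * ‖u‖ := by field_simp

lemma exists_ball_subset_forall_norm_fderiv_le {g : E → F} {s : Set E} {z : E} (hs : IsOpen s)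
    (hg : DifferentiableOn ℂ g s) (hz : z ∈ s) :
    ∃ δ > 0, ball z δ ⊆ s ∧ ∃ C, ∀ w ∈ ball z δ, ‖fderiv ℂ g w‖ ≤ C := by
  have hbdd : ∀ᶠ w in 𝓝 z, w ∈ s ∧ ‖g w‖ ≤ ‖g z‖ + 1 :=
    (hs.eventually_mem hz).and <| ((hg.continuousOn.continuousAt (hs.mem_nhds hz)).norm.eventually
      (gt_mem_nhds (lt_add_one _))).mono fun _ => le_of_lt
  obtain ⟨ε, hε, hεs⟩ := Metric.eventually_nhds_iff_ball.1 hbdd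
  refine ⟨ε / 2, by positivity, fun w hw => (hεs w (ball_subset_ball (by linarith) hw)).1,
    (‖g z‖ + 1) / (ε / 4), fun w hw => ?_⟩
  have hsub : closedBall w (ε / 4) ⊆ ball z ε := by
    intro v hv
    rw [mem_ball] at hw ⊢
    rw [mem_closedBall] at hv
    linarith [dist_triangle v w z]
  exact norm_fderiv_le_of_forall_mem_closedBall_norm_le (by positivity)
    (hg.mono fun v hv => (hεs v (hsub hv)).1) fun v hv => (hεs v (hsub hv)).2

lemma fderiv_apply_eq_circleIntegral [CompleteSpace F] {g : E → F} {z u : E}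
    (hg : ∀ t ∈ closedBall (0 : ℂ) 1, DifferentiableAt ℂ g (z + t • u)) :
    fderiv ℂ g z u = (2 * π * I)⁻¹ • ∮ t in C(0, 1), (t ^ 2)⁻¹ • g (z + t • u) := by
  have hslice : DifferentiableOn ℂ (fun t : ℂ => g (z + t • u)) (closedBall 0 1) :=
    fun t ht => ((hg t ht).comp t (by fun_prop)).differentiableWithinAt
  have hderiv : HasLineDerivAt ℂ g (fderiv ℂ g z u) z u := by
    simpa using (hg 0 (mem_closedBall_self zero_le_one)).hasFDerivAt.hasLineDerivAt u
  rw [eq_inv_smul_iff₀ two_pi_I_ne_zero, ← hderiv.deriv,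
    ← hslice.deriv_eq_smul_circleIntegral one_pos]
  simp

variable [FiniteDimensional ℂ E] [FiniteDimensional ℂ F]

lemma differentiableAt_fderiv_apply_of_norm_lt {g : E → F} {z₀ v : E} {δ C : ℝ}
    (hg : DifferentiableOn ℂ g (ball z₀ δ)) (hC : ∀ w ∈ ball z₀ δ, ‖fderiv ℂ g w‖ ≤ C)
    (hv : ‖v‖ < δ / 2) : DifferentiableAt ℂ (fun z => fderiv ℂ g z v) z₀ := by
  borelize E
  have hδ : 0 < δ := by linarith [norm_nonneg v]
  have hmem : ∀ z ∈ ball z₀ (δ / 2), ∀ t : ℂ, ‖t‖ ≤ 1 → z + t • v ∈ ball z₀ δ := by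
    intro z hz t ht
    rw [mem_ball, dist_eq_norm, add_sub_right_comm] at *
    calc ‖z - z₀ + t • v‖ ≤ ‖z - z₀‖ + ‖t‖ * ‖v‖ := (norm_add_le _ _).trans_eq (by rw [norm_smul])
      _ < δ / 2 + 1 * (δ / 2) := add_lt_add hz (mul_lt_mul' ht hv (norm_nonneg _) one_pos)
      _ = δ := by ring
  have hdiff : ∀ z ∈ ball z₀ (δ / 2), ∀ t : ℂ, ‖t‖ ≤ 1 → DifferentiableAt ℂ g (z + t • v) :=
    fun z hz t ht => hg.differentiableAt (isOpen_ball.mem_nhds (hmem z hz t ht))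
  set K : ℝ → ℂ := fun θ => circleMap 0 1 θ * I * (circleMap 0 1 θ ^ 2)⁻¹ with hK
  have hKc : Continuous K := (continuous_circleMap 0 1 |>.mul continuous_const).mul <|
    (continuous_circleMap 0 1).pow 2 |>.inv₀ fun _ =>
      pow_ne_zero 2 (circleMap_ne_center one_ne_zero)
  have hKn : ∀ θ, ‖K θ‖ = 1 := fun θ => by simp [hK, norm_circleMap_zero]
  have hcirc : ∀ θ, ‖circleMap 0 1 θ‖ ≤ 1 := fun θ => by simp [norm_circleMap_zero]
  have hball : ball z₀ (δ / 2) ∈ 𝓝 z₀ := ball_mem_nhds z₀ (half_pos hδ)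
  have hcont : ∀ z ∈ ball z₀ (δ / 2),
      Continuous fun θ => K θ • g (z + circleMap 0 1 θ • v) := fun z hz =>
    hKc.smul <| hg.continuousOn.comp_continuous (by fun_prop) fun θ => hmem z hz _ (hcirc θ)
  have hF := intervalIntegral.hasFDerivAt_integral_of_dominated_of_fderiv_le
    (μ := MeasureTheory.volume) (a := 0) (b := 2 * π) (bound := fun _ => C)
    (F := fun z θ => K θ • g (z + circleMap 0 1 θ • v))
    (F' := fun z θ => K θ • fderiv ℂ g (z + circleMap 0 1 θ • v)) hball
    (Filter.eventually_of_mem hball fun z hz => (hcont z hz).aestronglyMeasurable)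
    ((hcont z₀ (mem_ball_self (half_pos hδ))).intervalIntegrable _ _)
    (hKc.aestronglyMeasurable.smul
      ((measurable_fderiv ℂ g).comp (by fun_prop)).aestronglyMeasurable)
    (Filter.Eventually.of_forall fun θ _ z hz => by
      rw [norm_smul, hKn, one_mul]
      exact hC _ (hmem z hz _ (hcirc θ)))
    intervalIntegrable_const
    (Filter.Eventually.of_forall fun θ _ z hz =>
      (((hdiff z hz _ (hcirc θ)).hasFDerivAt.comp z ((hasFDerivAt_id z).add_const _)).const_smul
        (K θ)))
  refine (hF.differentiableAt.const_smul (2 * π * I)⁻¹).congr_of_eventuallyEq ?_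
  filter_upwards [hball] with z hz
  rw [fderiv_apply_eq_circleIntegral fun t ht => hdiff z hz t (mem_closedBall_zero_iff.1 ht),
    circleIntegral]
  simp only [hK, deriv_circleMap, smul_smul, Pi.smul_apply]

theorem DifferentiableOn.differentiableAt_fderiv_apply {g : E → F} {s : Set E} {z₀ : E}
    (hg : DifferentiableOn ℂ g s) (hs : IsOpen s) (hz₀ : z₀ ∈ s) (u : E) :
    DifferentiableAt ℂ (fun z => fderiv ℂ g z u) z₀ := by
  obtain ⟨δ, hδ, hδs, C, hC⟩ := exists_ball_subset_forall_norm_fderiv_le hs hg hz₀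
  set c : ℝ := δ / (4 * (‖u‖ + 1)) with hc
  have hc₀ : 0 < c := by positivity
  have hcu : ‖(c : ℂ) • u‖ < δ / 2 := by
    rw [norm_smul, Complex.norm_real, Real.norm_of_nonneg hc₀.le, hc, div_mul_eq_mul_div,
      div_lt_div_iff₀ (by positivity) two_pos]
    nlinarith [norm_nonneg u]
  have hscale : (fun z => fderiv ℂ g z u) = fun z => (c : ℂ)⁻¹ • fderiv ℂ g z ((c : ℂ) • u) := by
    ext1 z
    rw [map_smul, inv_smul_smul₀ (by exact_mod_cast hc₀.ne')]
  rw [hscale]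
  exact (differentiableAt_fderiv_apply_of_norm_lt (hg.mono hδs) hC hcu).const_smul _

theorem DifferentiableOn.fderiv_of_isOpen {g : E → F} {s : Set E} (hg : DifferentiableOn ℂ g s)
    (hs : IsOpen s) : DifferentiableOn ℂ (fderiv ℂ g) s := fun _ hz =>
  (differentiableAt_clm_apply_iff.2 fun u =>
    hg.differentiableAt_fderiv_apply hs hz u).differentiableWithinAt

end Regularity

section PreSchwarzian

variable (𝕜 : Type*) [NontriviallyNormedField 𝕜] {E : Type*} [NormedAddCommGroup E]
  [NormedSpace 𝕜 E]

/-- `P_g(z) u = Dg(z)⁻¹ ∘ D²g(z) u`; `ContinuousLinearMap.inverse` is `0` where `Dg(z)` is not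
invertible. -/
noncomputable def preSchwarzian (g : E → E) (z : E) : E →L[𝕜] E →L[𝕜] E :=
  ContinuousLinearMap.compL 𝕜 E E E (fderiv 𝕜 g z).inverse ∘L fderiv 𝕜 (fderiv 𝕜 g) z

variable {𝕜}

@[simp]
lemma preSchwarzian_apply_apply (g : E → E) (z u v : E) :
    preSchwarzian 𝕜 g z u v = (fderiv 𝕜 g z).inverse (fderiv 𝕜 (fderiv 𝕜 g) z u v) :=
  rfl

lemma fderiv_fderiv_apply_eq_mul_preSchwarzian {g : E → E} {z : E} (hg : IsUnit (fderiv 𝕜 g z))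
    (u : E) : fderiv 𝕜 (fderiv 𝕜 g) z u = fderiv 𝕜 g z * preSchwarzian 𝕜 g z u := by
  rw [← one_mul (fderiv 𝕜 (fderiv 𝕜 g) z u), ← Ring.mul_inverse_cancel _ hg, mul_assoc,
    ContinuousLinearMap.ringInverse_eq_inverse]
  rfl

variable [CompleteSpace E]

lemma hasFDerivAt_fderiv_mul_inverse_fderiv_of_preSchwarzian_eq {g h : E → E} {z : E}
    (hg : DifferentiableAt 𝕜 (fderiv 𝕜 g) z) (hh : DifferentiableAt 𝕜 (fderiv 𝕜 h) z)
    (hgu : IsUnit (fderiv 𝕜 g z)) (hhu : IsUnit (fderiv 𝕜 h z))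
    (hP : preSchwarzian 𝕜 g z = preSchwarzian 𝕜 h z) :
    HasFDerivAt (fun w => fderiv 𝕜 g w * Ring.inverse (fderiv 𝕜 h w))
      (0 : E →L[𝕜] E →L[𝕜] E) z := by
  have hinv := (hasFDerivAt_ringInverse hhu.unit).comp z hh.hasFDerivAt
  refine (hg.hasFDerivAt.mul' hinv).congr_fderiv ?_
  ext1 u
  simp only [add_apply, smul_apply, ContinuousLinearMap.comp_apply, neg_apply,
    ContinuousLinearMap.mulLeftRight_apply, zero_apply, ← Ring.inverse_unit, IsUnit.unit_spec,
    smul_eq_mul, op_smul_eq_mul, Function.comp_apply,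
    fderiv_fderiv_apply_eq_mul_preSchwarzian hgu, fderiv_fderiv_apply_eq_mul_preSchwarzian hhu, hP]
  rw [← mul_assoc (Ring.inverse _), Ring.inverse_mul_cancel _ hhu, one_mul, mul_neg, ← mul_assoc,
    neg_add_cancel]

variable [IsRCLikeNormedField 𝕜] [NormedSpace ℝ E]

theorem IsOpen.eqOn_of_preSchwarzian_eq {Ω : Set E} (hΩ : IsOpen Ω) (hΩc : IsPreconnected Ω)
    {g h : E → E} (hg : DifferentiableOn 𝕜 g Ω) (hh : DifferentiableOn 𝕜 h Ω)
    (hg' : DifferentiableOn 𝕜 (fderiv 𝕜 g) Ω) (hh' : DifferentiableOn 𝕜 (fderiv 𝕜 h) Ω)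
    (hgu : ∀ z ∈ Ω, IsUnit (fderiv 𝕜 g z)) (hhu : ∀ z ∈ Ω, IsUnit (fderiv 𝕜 h z))
    (hP : ∀ z ∈ Ω, preSchwarzian 𝕜 g z = preSchwarzian 𝕜 h z) {z₀ : E} (hz₀ : z₀ ∈ Ω)
    (h0 : g z₀ = h z₀) (h1 : fderiv 𝕜 g z₀ = fderiv 𝕜 h z₀) : EqOn g h Ω := by
  have hM : ∀ z ∈ Ω, HasFDerivAt (fun w => fderiv 𝕜 g w * Ring.inverse (fderiv 𝕜 h w)) 0 z :=
    fun z hz => hasFDerivAt_fderiv_mul_inverse_fderiv_of_preSchwarzian_eq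
      (hg'.differentiableAt (hΩ.mem_nhds hz)) (hh'.differentiableAt (hΩ.mem_nhds hz)) (hgu z hz)
      (hhu z hz) (hP z hz)
  have hM_one : EqOn (fun w => fderiv 𝕜 g w * Ring.inverse (fderiv 𝕜 h w)) 1 Ω :=
    hΩ.eqOn_of_fderiv_eq hΩc (fun z hz => (hM z hz).differentiableAt.differentiableWithinAt)
      (differentiableOn_const 1)
      (fun z hz => by rw [(hM z hz).fderiv]; exact (hasFDerivAt_const 1 z).fderiv.symm) hz₀
      (by simp [h1, Ring.mul_inverse_cancel _ (hhu z₀ hz₀)])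
  have hD : ∀ z ∈ Ω, fderiv 𝕜 g z = fderiv 𝕜 h z := fun z hz => by
    have hz_one : fderiv 𝕜 g z * Ring.inverse (fderiv 𝕜 h z) = 1 := hM_one hz
    calc fderiv 𝕜 g z = fderiv 𝕜 g z * Ring.inverse (fderiv 𝕜 h z) * fderiv 𝕜 h z := by
          rw [mul_assoc, Ring.inverse_mul_cancel _ (hhu z hz), mul_one]
      _ = fderiv 𝕜 h z := by rw [hz_one, one_mul]
  exact hΩ.eqOn_of_fderiv_eq hΩc hg hh hD hz₀ h0

end PreSchwarzian

theorem falpha_unique_general (n : ℕ)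
    (Ω : Set (Fin n → ℂ)) (hΩ : IsOpen Ω) (hconn : IsConnected Ω)
    (z₀ : Fin n → ℂ) (hz₀ : z₀ ∈ Ω) (α : ℂ)
    (f g h : (Fin n → ℂ) → (Fin n → ℂ))
    (hg : DifferentiableOn ℂ g Ω)
    (hh : DifferentiableOn ℂ h Ω)
    (hginv : ∀ z ∈ Ω, ∃ e : (Fin n → ℂ) ≃L[ℂ] (Fin n → ℂ),
      (e : (Fin n → ℂ) →L[ℂ] (Fin n → ℂ)) = fderiv ℂ g z)
    (hhinv : ∀ z ∈ Ω, ∃ e : (Fin n → ℂ) ≃L[ℂ] (Fin n → ℂ),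
      (e : (Fin n → ℂ) →L[ℂ] (Fin n → ℂ)) = fderiv ℂ h z)
    (hpreg : ∀ z ∈ Ω, ∀ u v : Fin n → ℂ,
      (fderiv ℂ g z).inverse (fderiv ℂ (fderiv ℂ g) z u v) =
      α • (fderiv ℂ f z).inverse (fderiv ℂ (fderiv ℂ f) z u v))
    (hpreh : ∀ z ∈ Ω, ∀ u v : Fin n → ℂ,
      (fderiv ℂ h z).inverse (fderiv ℂ (fderiv ℂ h) z u v) =
      α • (fderiv ℂ f z).inverse (fderiv ℂ (fderiv ℂ f) z u v))
    (h0 : g z₀ = h z₀) (h1 : fderiv ℂ g z₀ = fderiv ℂ h z₀) :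
    EqOn g h Ω := by
  have hgu : ∀ z ∈ Ω, IsUnit (fderiv ℂ g z) := fun z hz => by
    obtain ⟨e, he⟩ := hginv z hz
    exact he ▸ e.toUnit.isUnit
  have hhu : ∀ z ∈ Ω, IsUnit (fderiv ℂ h z) := fun z hz => by
    obtain ⟨e, he⟩ := hhinv z hz
    exact he ▸ e.toUnit.isUnit
  have hP : ∀ z ∈ Ω, preSchwarzian ℂ g z = preSchwarzian ℂ h z := fun z hz => by
    ext u v
    simp only [preSchwarzian_apply_apply, hpreg z hz, hpreh z hz]
  exact hΩ.eqOn_of_preSchwarzian_eq hconn.isPreconnected hg hh (hg.fderiv_of_isOpen hΩ)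
    (hh.fderiv_of_isOpen hΩ) hgu hhu hP hz₀ h0 h1

/-- Uniqueness of `f_α`: two normalized solutions of `P_g = α • P_f` agreeing with
their derivatives at a point of a connected open set coincide. -/
theorem falpha_unique (n : ℕ)
    (Ω : Set (Fin n → ℂ)) (hΩ : IsOpen Ω) (hconn : IsConnected Ω)
    (z₀ : Fin n → ℂ) (hz₀ : z₀ ∈ Ω) (α : ℂ)
    (f g h : (Fin n → ℂ) → (Fin n → ℂ))
    (hf : DifferentiableOn ℂ f Ω) (hg : DifferentiableOn ℂ g Ω)
    (hh : DifferentiableOn ℂ h Ω)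
    (hfinv : ∀ z ∈ Ω, ∃ e : (Fin n → ℂ) ≃L[ℂ] (Fin n → ℂ),
      (e : (Fin n → ℂ) →L[ℂ] (Fin n → ℂ)) = fderiv ℂ f z)
    (hginv : ∀ z ∈ Ω, ∃ e : (Fin n → ℂ) ≃L[ℂ] (Fin n → ℂ),
      (e : (Fin n → ℂ) →L[ℂ] (Fin n → ℂ)) = fderiv ℂ g z)
    (hhinv : ∀ z ∈ Ω, ∃ e : (Fin n → ℂ) ≃L[ℂ] (Fin n → ℂ),
      (e : (Fin n → ℂ) →L[ℂ] (Fin n → ℂ)) = fderiv ℂ h z)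
    (hpreg : ∀ z ∈ Ω, ∀ u v : Fin n → ℂ,
      (fderiv ℂ g z).inverse (fderiv ℂ (fderiv ℂ g) z u v) =
      α • (fderiv ℂ f z).inverse (fderiv ℂ (fderiv ℂ f) z u v))
    (hpreh : ∀ z ∈ Ω, ∀ u v : Fin n → ℂ,
      (fderiv ℂ h z).inverse (fderiv ℂ (fderiv ℂ h) z u v) =
      α • (fderiv ℂ f z).inverse (fderiv ℂ (fderiv ℂ f) z u v))
    (h0 : g z₀ = h z₀) (h1 : fderiv ℂ g z₀ = fderiv ℂ h z₀) :
    EqOn g h Ω :=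
  falpha_unique_general n Ω hΩ hconn z₀ hz₀ α f g h hg hh hginv hhinv hpreg hpreh h0 h1
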